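/- Let ε > 0, let ν be distributed as Lap(1/ε), and let a, a', T be real numbers with a' ≤ a ≤ a' + 1. Then: (1) Pr[a + ν ≥ T] ≤ e^{ε} · Pr[a' + ν ≥ T], and (2) Pr[a + ν < T] ≤ Pr[a' + ν < T]. -/
import Mathlib


open MeasureTheory Real

/-- `Lap b` : the Laplace distribution on `ℝ` with density
`x ↦ (1/(2b)) * exp (-|x|/b)` with respect to Lebesgue measure. -/
noncomputable def laplace (b : ℝ) : Measure ℝ :=
  volume.withDensity (fun x => ENNReal.ofReal ((1 / (2 * b)) * Real.exp (-|x| / b)))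

/-- Core inequalities behind the privacy proof of `SVT_sum`, for monotonic queries
of sensitivity `1`: with `ν ~ Lap(1/ε)` and `a' ≤ a ≤ a' + 1`,
(1) `Pr[a + ν ≥ T] ≤ e^ε · Pr[a' + ν ≥ T]`, and
(2) `Pr[a + ν < T] ≤ Pr[a' + ν < T]`. -/
theorem svt_threshold_inequalities (ε a a' T : ℝ) (hε : 0 < ε)
    (h₁ : a' ≤ a) (h₂ : a ≤ a' + 1) :
    laplace (1 / ε) {x : ℝ | T ≤ a + x} ≤
      ENNReal.ofReal (Real.exp ε) * laplace (1 / ε) {x : ℝ | T ≤ a' + x} ∧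
    laplace (1 / ε) {x : ℝ | a + x < T} ≤ laplace (1 / ε) {x : ℝ | a' + x < T} := by
  set b : ℝ := 1 / ε with hb
  set f : ℝ → ENNReal := fun x => ENNReal.ofReal ((1 / (2 * b)) * Real.exp (-|x| / b))
    with hf
  set d : ℝ := a - a' with hd
  have hd0 : 0 ≤ d := sub_nonneg.mpr h₁
  have hd1 : d ≤ 1 := by simp [hd]; linarith
  constructor
  · -- (1)
    have hset1 : {x : ℝ | T ≤ a + x} = Set.Ici (T - a) := by
      ext x; simp [Set.mem_Ici]; constructor <;> intro h <;> linarith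
    have hset2 : {x : ℝ | T ≤ a' + x} = Set.Ici (T - a') := by
      ext x; simp [Set.mem_Ici]; constructor <;> intro h <;> linarith
    rw [hset1, hset2]
    have hm1 : MeasurableSet (Set.Ici (T - a)) := measurableSet_Ici
    have hm2 : MeasurableSet (Set.Ici (T - a')) := measurableSet_Ici
    rw [laplace, withDensity_apply _ hm1, withDensity_apply _ hm2,
      ← lintegral_indicator hm1, ← lintegral_indicator hm2]
    set g : ℝ → ENNReal := (Set.Ici (T - a)).indicator f with hg
    have key : ∫⁻ x, g x = ∫⁻ x, g (x + (-d)) :=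
      (lintegral_add_right_eq_self g (-d)).symm
    rw [key, ← lintegral_const_mul' _ _ (by simp)]
    refine lintegral_mono fun x => ?_
    by_cases hx : T - a' ≤ x
    · have hx' : x + (-d) ∈ Set.Ici (T - a) := by
        simp [Set.mem_Ici, hd]; linarith
      rw [hg, Set.indicator_of_mem hx', Set.indicator_of_mem (Set.mem_Ici.mpr hx)]
      -- f (x - d) ≤ e^ε * f x
      have hb0 : 0 < b := by positivity
      have : (1 / (2 * b)) * Real.exp (-|x + (-d)| / b) ≤
          Real.exp ε * ((1 / (2 * b)) * Real.exp (-|x| / b)) := by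
        rw [mul_comm (Real.exp ε), mul_assoc, ← Real.exp_add]
        apply mul_le_mul_of_nonneg_left _ (by positivity)
        apply Real.exp_le_exp.mpr
        have habs : |x| - |x + (-d)| ≤ d := by
          have := abs_sub_abs_le_abs_sub x (x + (-d))
          simp at this
          calc |x| - |x + (-d)| ≤ |x - (x + (-d))| := abs_sub_abs_le_abs_sub _ _
            _ = |d| := by ring_nf
            _ = d := abs_of_nonneg hd0
        have hεb : ε = 1 / b := by rw [hb]; field_simp
        have h3 : -|x + -d| ≤ 1 - |x| := by
          have := habs.trans hd1; linarith
        calc -|x + -d| / b ≤ (1 - |x|) / b := by gcongr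
          _ = -|x| / b + ε := by rw [hεb]; ring
      calc f (x + (-d)) ≤ ENNReal.ofReal (Real.exp ε * ((1 / (2 * b)) * Real.exp (-|x| / b))) :=
            ENNReal.ofReal_le_ofReal this
        _ = ENNReal.ofReal (Real.exp ε) * f x := by
            rw [ENNReal.ofReal_mul (Real.exp_nonneg ε)]
    · have hx1 : x + (-d) ∉ Set.Ici (T - a) := by
        simp [Set.mem_Ici, hd] at *; linarith
      have hx2 : x ∉ Set.Ici (T - a') := by simpa [Set.mem_Ici] using hx
      rw [hg, Set.indicator_of_notMem hx1, Set.indicator_of_notMem hx2]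
      simp
  · -- (2)
    apply measure_mono
    intro x hx
    simp only [Set.mem_setOf_eq] at *
    linarith
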